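/- For t ≥ 0 and f ∈ L¹(Ω,μ) define (U₀(t)f)(x) = f(Φ(x,−t)) if t < τ−(x) and (U₀(t)f)(x) = 0 otherwise. Then (U₀(t))_{t≥0} is a nonnegative C₀-semigroup of contractions on L¹(Ω,μ): (i) U₀(t)f ∈ L¹(Ω,μ) with ‖U₀(t)f‖_{L¹} ≤ ‖f‖_{L¹}; (ii) U₀(0)f = f and U₀(t)U₀(s)f = U₀(t+s)f for all t,s ≥ 0; (iii) if f ≥ 0 μ-a.e. then U₀(t)f ≥ 0 μ-a.e.; (iv) ‖U₀(t)f − f‖_{L¹} → 0 as t → 0+. -/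

import Mathlib

open MeasureTheory Set Filter Topology
open scoped ENNReal NNReal

noncomputable section

/-- Forward exit time of the flow `Φ` from `Ω` (`∞` if the forward curve never leaves `Ω`). -/
def tauP {N : ℕ} (Ω : Set (Fin N → ℝ)) (Φ : (Fin N → ℝ) → ℝ → (Fin N → ℝ))
    (x : Fin N → ℝ) : ℝ≥0∞ :=
  sInf {s : ℝ≥0∞ | ∃ r : ℝ, 0 < r ∧ s = ENNReal.ofReal r ∧ Φ x r ∉ Ω}

/-- Backward exit time of the flow `Φ` from `Ω`. -/
def tauM {N : ℕ} (Ω : Set (Fin N → ℝ)) (Φ : (Fin N → ℝ) → ℝ → (Fin N → ℝ))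
    (x : Fin N → ℝ) : ℝ≥0∞ :=
  sInf {s : ℝ≥0∞ | ∃ r : ℝ, 0 < r ∧ s = ENNReal.ofReal r ∧ Φ x (-r) ∉ Ω}

/-- `∫_0^τ g(s) ds`, over `(0,∞)` when `τ = ∞`. -/
def curveInt (g : ℝ → ℝ) (τ : ℝ≥0∞) : ℝ :=
  ∫ s in {s : ℝ | 0 < s ∧ ENNReal.ofReal s < τ}, g s

/-- The incoming part `Γ₋` of the boundary `∂Ω`. -/
def GammaM {N : ℕ} (Ω : Set (Fin N → ℝ)) (Φ : (Fin N → ℝ) → ℝ → (Fin N → ℝ)) :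
    Set (Fin N → ℝ) :=
  {y ∈ frontier Ω | ∃ x ∈ Ω, tauM Ω Φ x < ⊤ ∧ y = Φ x (-(tauM Ω Φ x).toReal)}

/-- The outgoing part `Γ₊` of the boundary `∂Ω`. -/
def GammaP {N : ℕ} (Ω : Set (Fin N → ℝ)) (Φ : (Fin N → ℝ) → ℝ → (Fin N → ℝ)) :
    Set (Fin N → ℝ) :=
  {y ∈ frontier Ω | ∃ x ∈ Ω, tauP Ω Φ x < ⊤ ∧ y = Φ x ((tauP Ω Φ x).toReal)}

/-- The boundary measures `μ∓` satisfy the integration-along-characteristics identities. -/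
def IsBoundaryMeasures {N : ℕ} (Ω : Set (Fin N → ℝ)) (Φ : (Fin N → ℝ) → ℝ → (Fin N → ℝ))
    (μ μm μp : Measure (Fin N → ℝ)) : Prop :=
  ∀ f : (Fin N → ℝ) → ℝ, Integrable f (μ.restrict Ω) →
    (∫ x in {x ∈ Ω | tauM Ω Φ x < ⊤}, f x ∂μ
        = ∫ y in GammaM Ω Φ, curveInt (fun s => f (Φ y s)) (tauP Ω Φ y) ∂μm) ∧
    (∫ x in {x ∈ Ω | tauP Ω Φ x < ⊤}, f x ∂μ
        = ∫ y in GammaP Ω Φ, curveInt (fun s => f (Φ y (-s))) (tauM Ω Φ y) ∂μp)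

/-- The identities of Lemma `defmu+-` (beals1 and beals2). -/
def BealsProperty {N : ℕ} (Ω : Set (Fin N → ℝ)) (Φ : (Fin N → ℝ) → ℝ → (Fin N → ℝ))
    (μ μm μp : Measure (Fin N → ℝ)) : Prop :=
  ∀ T : ℝ, 0 < T → ∀ f : ((Fin N → ℝ) × ℝ) → ℝ,
    Integrable f ((μ.restrict Ω).prod (volume.restrict (Ioo (0 : ℝ) T))) →
    (∫ p, f p ∂((μ.restrict Ω).prod (volume.restrict (Ioo (0 : ℝ) T)))
        = (∫ t in Ioo (0 : ℝ) T, (∫ y in GammaP Ω Φ,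
            (∫ s in Ioo (0 : ℝ) ((tauM Ω Φ y ⊓ ENNReal.ofReal t).toReal),
              f (Φ y (-s), t - s)) ∂μp))
          + ∫ x in Ω, (∫ s in Ioo (0 : ℝ) ((tauM Ω Φ x ⊓ ENNReal.ofReal T).toReal),
              f (Φ x (-s), T - s)) ∂μ)
    ∧ (∫ p, f p ∂((μ.restrict Ω).prod (volume.restrict (Ioo (0 : ℝ) T)))
        = (∫ t in Ioo (0 : ℝ) T, (∫ y in GammaM Ω Φ,
            (∫ s in Ioo (0 : ℝ) ((tauP Ω Φ y ⊓ ENNReal.ofReal (T - t)).toReal),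
              f (Φ y s, t + s)) ∂μm))
          + ∫ x in Ω, (∫ s in Ioo (0 : ℝ) ((tauP Ω Φ x ⊓ ENNReal.ofReal T).toReal),
              f (Φ x s, s)) ∂μ)

/-- The class `𝔜` of test functions, together with the derivative `Dψ` along the flow. -/
structure IsTestFun {N : ℕ} (Ω : Set (Fin N → ℝ)) (Φ : (Fin N → ℝ) → ℝ → (Fin N → ℝ))
    (ψ Dψ : (Fin N → ℝ) → ℝ) : Prop where
  measurable : Measurable ψ
  bounded : ∃ C, ∀ x, |ψ x| ≤ C
  compact_support : ∃ K : Set (Fin N → ℝ), IsCompact K ∧ K ⊆ Ω ∧ ∀ x ∉ K, ψ x = 0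
  smooth : ∀ x ∈ Ω, ContDiffOn ℝ 1 (fun s => ψ (Φ x s))
      {s : ℝ | ENNReal.ofReal s < tauP Ω Φ x ∧ ENNReal.ofReal (-s) < tauM Ω Φ x}
  hasDeriv : ∀ x ∈ Ω, HasDerivAt (fun s => ψ (Φ x s)) (Dψ x) 0
  measurableD : Measurable Dψ
  boundedD : ∃ C, ∀ x, |Dψ x| ≤ C

/-- `f ∈ D(T_max)` with `T_max f = g`. -/
def InDomTmax {N : ℕ} (Ω : Set (Fin N → ℝ)) (Φ : (Fin N → ℝ) → ℝ → (Fin N → ℝ))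
    (μ : Measure (Fin N → ℝ)) (f g : (Fin N → ℝ) → ℝ) : Prop :=
  Integrable f (μ.restrict Ω) ∧ Integrable g (μ.restrict Ω) ∧
    ∀ ψ Dψ : (Fin N → ℝ) → ℝ, IsTestFun Ω Φ ψ Dψ →
      ∫ x in Ω, g x * ψ x ∂μ = ∫ x in Ω, f x * Dψ x ∂μ

/-- A sequence of one-dimensional mollifiers supported in `[0, 1/n]`. -/
def IsMollifier (ρ : ℕ → ℝ → ℝ) : Prop :=
  ∀ n : ℕ, ContDiff ℝ (⊤ : ℕ∞) (ρ n) ∧ (∀ s, 0 ≤ ρ n s) ∧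
    (∀ s, s ∉ Icc (0 : ℝ) (1 / (n + 1 : ℝ)) → ρ n s = 0) ∧ (∫ s, ρ n s) = 1

/-- Mollification along the characteristic curves. -/
def moll {N : ℕ} (Ω : Set (Fin N → ℝ)) (Φ : (Fin N → ℝ) → ℝ → (Fin N → ℝ))
    (ρ : ℝ → ℝ) (f : (Fin N → ℝ) → ℝ) (x : Fin N → ℝ) : ℝ :=
  curveInt (fun s => ρ s * f (Φ x (-s))) (tauM Ω Φ x)

/-- The lifted flow `Ψ(ξ,s) = (Φ(ξ₁,s), ξ₂+s)` on `Ω × (0,T)`. -/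
def lflow {N : ℕ} (Φ : (Fin N → ℝ) → ℝ → (Fin N → ℝ)) (ξ : (Fin N → ℝ) × ℝ) (s : ℝ) :
    (Fin N → ℝ) × ℝ := (Φ ξ.1 s, ξ.2 + s)

/-- Forward exit time `ℓ₊` of the lifted flow. -/
def ellP {N : ℕ} (Ω : Set (Fin N → ℝ)) (Φ : (Fin N → ℝ) → ℝ → (Fin N → ℝ)) (T : ℝ)
    (ξ : (Fin N → ℝ) × ℝ) : ℝ≥0∞ := tauP Ω Φ ξ.1 ⊓ ENNReal.ofReal (T - ξ.2)

/-- Backward exit time `ℓ₋` of the lifted flow. -/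
def ellM {N : ℕ} (Ω : Set (Fin N → ℝ)) (Φ : (Fin N → ℝ) → ℝ → (Fin N → ℝ))
    (ξ : (Fin N → ℝ) × ℝ) : ℝ≥0∞ := tauM Ω Φ ξ.1 ⊓ ENNReal.ofReal ξ.2

/-- The incoming part `Σ₋,T` of the boundary of `Ω × (0,T)`. -/
def SigmaM {N : ℕ} (Ω : Set (Fin N → ℝ)) (Φ : (Fin N → ℝ) → ℝ → (Fin N → ℝ)) (T : ℝ) :
    Set ((Fin N → ℝ) × ℝ) :=
  {ζ ∈ frontier (Ω ×ˢ Ioo (0 : ℝ) T) |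
    ∃ ξ ∈ Ω ×ˢ Ioo (0 : ℝ) T, ζ = lflow Φ ξ (-(ellM Ω Φ ξ).toReal)}

/-- The outgoing part `Σ₊,T` of the boundary of `Ω × (0,T)`. -/
def SigmaP {N : ℕ} (Ω : Set (Fin N → ℝ)) (Φ : (Fin N → ℝ) → ℝ → (Fin N → ℝ)) (T : ℝ) :
    Set ((Fin N → ℝ) × ℝ) :=
  {ζ ∈ frontier (Ω ×ˢ Ioo (0 : ℝ) T) |
    ∃ ξ ∈ Ω ×ˢ Ioo (0 : ℝ) T, ζ = lflow Φ ξ ((ellP Ω Φ T ξ).toReal)}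

/-- The semigroup `U₀(t)` with no re-entry boundary conditions. -/
def U0 {N : ℕ} (Ω : Set (Fin N → ℝ)) (Φ : (Fin N → ℝ) → ℝ → (Fin N → ℝ)) (t : ℝ)
    (f : (Fin N → ℝ) → ℝ) (x : Fin N → ℝ) : ℝ :=
  if ENNReal.ofReal t < tauM Ω Φ x then f (Φ x (-t)) else 0

/-- `x ↦ ∫_0^{τ₋(x)} e^{-λ t} g(Φ(x,-t)) dt`. -/
def resolv {N : ℕ} (Ω : Set (Fin N → ℝ)) (Φ : (Fin N → ℝ) → ℝ → (Fin N → ℝ)) (lam : ℝ)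
    (g : (Fin N → ℝ) → ℝ) (x : Fin N → ℝ) : ℝ :=
  curveInt (fun t => Real.exp (-(lam * t)) * g (Φ x (-t))) (tauM Ω Φ x)

/-- The candidate solution of the boundary value problem `(λ - T_max) f = g`, `B⁻ f = u`. -/
def bvpSol {N : ℕ} (Ω : Set (Fin N → ℝ)) (Φ : (Fin N → ℝ) → ℝ → (Fin N → ℝ)) (lam : ℝ)
    (g u : (Fin N → ℝ) → ℝ) (x : Fin N → ℝ) : ℝ :=
  resolv Ω Φ lam g x +
    (if tauM Ω Φ x < ⊤ then
      Real.exp (-(lam * (tauM Ω Φ x).toReal)) * u (Φ x (-(tauM Ω Φ x).toReal)) else 0)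

/-- `f` has incoming trace `u` on `Γ₋`, via an absolutely continuous representative
(along the characteristics, with derivative `-g`). -/
def IsTraceM {N : ℕ} (Ω : Set (Fin N → ℝ)) (Φ : (Fin N → ℝ) → ℝ → (Fin N → ℝ))
    (μ μm : Measure (Fin N → ℝ)) (f g u : (Fin N → ℝ) → ℝ) : Prop :=
  ∃ fs : (Fin N → ℝ) → ℝ, fs =ᵐ[μ.restrict Ω] f ∧
    (∀ᵐ x ∂μ.restrict Ω, ∀ t₁ t₂ : ℝ, t₁ ≤ t₂ →
      ENNReal.ofReal (-t₁) < tauM Ω Φ x → ENNReal.ofReal t₂ < tauP Ω Φ x →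
      fs (Φ x t₁) - fs (Φ x t₂) = ∫ s in t₁..t₂, g (Φ x s)) ∧
    ∀ᵐ y ∂μm.restrict (GammaM Ω Φ),
      Tendsto (fun t => fs (Φ y t)) (𝓝[>] (0 : ℝ)) (𝓝 (u y))

/-- `f` has outgoing trace `w` on `Γ₊`. -/
def IsTraceP {N : ℕ} (Ω : Set (Fin N → ℝ)) (Φ : (Fin N → ℝ) → ℝ → (Fin N → ℝ))
    (μ μp : Measure (Fin N → ℝ)) (f g w : (Fin N → ℝ) → ℝ) : Prop :=
  ∃ fs : (Fin N → ℝ) → ℝ, fs =ᵐ[μ.restrict Ω] f ∧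
    (∀ᵐ x ∂μ.restrict Ω, ∀ t₁ t₂ : ℝ, t₁ ≤ t₂ →
      ENNReal.ofReal (-t₁) < tauM Ω Φ x → ENNReal.ofReal t₂ < tauP Ω Φ x →
      fs (Φ x t₁) - fs (Φ x t₂) = ∫ s in t₁..t₂, g (Φ x s)) ∧
    ∀ᵐ y ∂μp.restrict (GammaP Ω Φ),
      Tendsto (fun t => fs (Φ y (-t))) (𝓝[>] (0 : ℝ)) (𝓝 (w y))

namespace Stmt17Aux

variable {N : ℕ} {κ : ℝ≥0} {F : (Fin N → ℝ) → (Fin N → ℝ)}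
  {Φ : (Fin N → ℝ) → ℝ → (Fin N → ℝ)}

variable {N : ℕ} {κ : ℝ≥0} {F : (Fin N → ℝ) → (Fin N → ℝ)}
  {Φ : (Fin N → ℝ) → ℝ → (Fin N → ℝ)}

theorem contPhi (hΦ' : ∀ x s, HasDerivAt (Φ x) (F (Φ x s)) s) (x : Fin N → ℝ) :
    Continuous (Φ x) :=
  continuous_iff_continuousAt.2 fun s => (hΦ' x s).continuousAt

theorem flow_add (hF : LipschitzWith κ F) (hΦ0 : ∀ x, Φ x 0 = x)
    (hΦ' : ∀ x s, HasDerivAt (Φ x) (F (Φ x s)) s)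
    (x : Fin N → ℝ) (a b : ℝ) : Φ x (a + b) = Φ (Φ x a) b := by
  have h0 : (0 : ℝ) ∈ Ioo (-(|b| + 1)) (|b| + 1) := by
    constructor <;> nlinarith [abs_nonneg b]
  have hf' : ∀ t : ℝ, HasDerivAt (fun t => Φ x (a + t)) (F (Φ x (a + t))) t := by
    intro t
    have h1 : HasDerivAt (fun t : ℝ => a + t) 1 t := (hasDerivAt_id t).const_add a
    have := (hΦ' x (a + t)).scomp t h1
    simpa [Function.comp_def] using this
  have key := ODE_solution_unique_of_mem_Icc (v := fun _ y => F y) (s := fun _ => univ)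
    (K := κ) (f := fun t => Φ x (a + t)) (g := Φ (Φ x a))
    (fun _ _ => hF.lipschitzOnWith) h0
    (continuous_iff_continuousAt.2 fun s => (hf' s).continuousAt).continuousOn
    (fun t _ => hf' t) (fun _ _ => trivial)
    (contPhi hΦ' _).continuousOn (fun t _ => hΦ' _ t) (fun _ _ => trivial)
    (by simp [hΦ0])
  exact key ⟨by nlinarith [le_abs_self b, neg_abs_le b], by nlinarith [le_abs_self b]⟩

theorem flow_inv (hF : LipschitzWith κ F) (hΦ0 : ∀ x, Φ x 0 = x)
    (hΦ' : ∀ x s, HasDerivAt (Φ x) (F (Φ x s)) s)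
    (x : Fin N → ℝ) (t : ℝ) : Φ (Φ x t) (-t) = x := by
  rw [← flow_add hF hΦ0 hΦ' x t (-t), add_neg_cancel, hΦ0]

theorem dist_flow_le (hF : LipschitzWith κ F) (hΦ0 : ∀ x, Φ x 0 = x)
    (hΦ' : ∀ x s, HasDerivAt (Φ x) (F (Φ x s)) s)
    (x y : Fin N → ℝ) (t : ℝ) : dist (Φ x t) (Φ y t) ≤ dist x y * Real.exp (κ * |t|) := by
  rcases le_total 0 t with ht | ht
  · have := dist_le_of_trajectories_ODE (v := fun _ z => F z) (K := κ)
      (f := Φ x) (g := Φ y) (a := 0) (b := t) (δ := dist x y)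
      (fun _ => hF) (contPhi hΦ' x).continuousOn
      (fun s _ => (hΦ' x s).hasDerivWithinAt) (contPhi hΦ' y).continuousOn
      (fun s _ => (hΦ' y s).hasDerivWithinAt) (by rw [hΦ0, hΦ0]) t ⟨ht, le_rfl⟩
    simpa [abs_of_nonneg ht] using this
  · have hd : ∀ z : Fin N → ℝ, ∀ s : ℝ,
        HasDerivAt (fun s => Φ z (-s)) ((-1 : ℝ) • F (Φ z (-s))) s := by
      intro z s
      exact (hΦ' z (-s)).scomp s (hasDerivAt_neg s)
    have hlip : LipschitzWith κ (fun z : Fin N → ℝ => (-1 : ℝ) • F z) := by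
      have : LipschitzWith 1 (fun w : Fin N → ℝ => (-1 : ℝ) • w) := by
        apply LipschitzWith.of_dist_le_mul
        intro a b
        rw [dist_smul₀]
        simp
      simpa [Function.comp_def] using this.comp hF
    have := dist_le_of_trajectories_ODE (v := fun _ z => (-1 : ℝ) • F z) (K := κ)
      (f := fun s => Φ x (-s)) (g := fun s => Φ y (-s)) (a := 0) (b := -t) (δ := dist x y)
      (fun _ => hlip)
      ((contPhi hΦ' x).comp continuous_neg).continuousOn
      (fun s _ => (hd x s).hasDerivWithinAt)
      ((contPhi hΦ' y).comp continuous_neg).continuousOn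
      (fun s _ => (hd y s).hasDerivWithinAt) (by norm_num [hΦ0]) (-t) ⟨by linarith, le_rfl⟩
    simpa [abs_of_nonpos ht] using this

theorem cont_in_x (hF : LipschitzWith κ F) (hΦ0 : ∀ x, Φ x 0 = x)
    (hΦ' : ∀ x s, HasDerivAt (Φ x) (F (Φ x s)) s) (t : ℝ) :
    Continuous (fun x => Φ x t) := by
  have : LipschitzWith (Real.exp (κ * |t|)).toNNReal (fun x => Φ x t) := by
    apply LipschitzWith.of_dist_le_mul
    intro x y
    rw [Real.coe_toNNReal _ (Real.exp_pos _).le, mul_comm]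
    exact dist_flow_le hF hΦ0 hΦ' x y t
  exact this.continuous

/-- The flow at time `t` as a measurable equivalence. -/
def flowEquiv (Φ : (Fin N → ℝ) → ℝ → (Fin N → ℝ)) (hF : LipschitzWith κ F)
    (hΦ0 : ∀ x, Φ x 0 = x) (hΦ' : ∀ x s, HasDerivAt (Φ x) (F (Φ x s)) s) (t : ℝ) :
    (Fin N → ℝ) ≃ᵐ (Fin N → ℝ) where
  toFun := fun x => Φ x t
  invFun := fun x => Φ x (-t)
  left_inv := fun x => flow_inv hF hΦ0 hΦ' x t
  right_inv := fun x => by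
    have := flow_inv hF hΦ0 hΦ' x (-t); rwa [neg_neg] at this
  measurable_toFun := (cont_in_x hF hΦ0 hΦ' t).measurable
  measurable_invFun := (cont_in_x hF hΦ0 hΦ' (-t)).measurable

theorem map_flowEquiv (hF : LipschitzWith κ F) (hΦ0 : ∀ x, Φ x 0 = x)
    (hΦ' : ∀ x s, HasDerivAt (Φ x) (F (Φ x s)) s)
    (μ : Measure (Fin N → ℝ))
    (hinv : ∀ (A : Set (Fin N → ℝ)) (t : ℝ), MeasurableSet A →
      μ ((fun x => Φ x t) '' A) = μ A) (t : ℝ) :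
    Measure.map (flowEquiv Φ hF hΦ0 hΦ' t) μ = μ := by
  ext A hA
  rw [Measure.map_apply (flowEquiv Φ hF hΦ0 hΦ' t).measurable hA]
  have : (flowEquiv Φ hF hΦ0 hΦ' t) ⁻¹' A = (fun x => Φ x (-t)) '' A := by
    ext z
    constructor
    · intro hz
      exact ⟨Φ z t, hz, flow_inv hF hΦ0 hΦ' z t⟩
    · rintro ⟨a, ha, rfl⟩
      have : Φ (Φ a (-t)) t = a := by
        have := flow_inv hF hΦ0 hΦ' a (-t); rwa [neg_neg] at this
      simpa [flowEquiv, this] using ha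
  rw [this, hinv A (-t) hA]


variable {Ω : Set (Fin N → ℝ)}

theorem tauM_le (x : Fin N → ℝ) {r : ℝ} (hr : 0 < r) (h : Φ x (-r) ∉ Ω) :
    tauM Ω Φ x ≤ ENNReal.ofReal r :=
  sInf_le ⟨r, hr, rfl, h⟩

theorem memG_iff (hΦ0 : ∀ x, Φ x 0 = x) (hΦ' : ∀ x s, HasDerivAt (Φ x) (F (Φ x s)) s) (hΩ : IsOpen Ω)
    {t : ℝ} (ht : 0 ≤ t) (x : Fin N → ℝ) :
    (x ∈ Ω ∧ ENNReal.ofReal t < tauM Ω Φ x) ↔ ∀ r ∈ Icc (0 : ℝ) t, Φ x (-r) ∈ Ω := by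
  constructor
  · rintro ⟨hx, hlt⟩ r hr
    rcases eq_or_lt_of_le hr.1 with h0 | h0
    · simpa [← h0, hΦ0] using hx
    · by_contra hout
      exact absurd (le_trans (tauM_le x h0 hout) (ENNReal.ofReal_le_ofReal hr.2))
        (not_le.2 hlt)
  · intro h
    have hx : x ∈ Ω := by simpa [hΦ0] using h 0 ⟨le_rfl, ht⟩
    refine ⟨hx, ?_⟩
    have hc : ContinuousAt (fun s => Φ x (-s)) t :=
      ((contPhi hΦ' x).comp continuous_neg).continuousAt
    have hev : ∀ᶠ s in 𝓝 t, Φ x (-s) ∈ Ω :=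
      hc.preimage_mem_nhds (hΩ.mem_nhds (h t ⟨ht, le_rfl⟩))
    obtain ⟨δ, hδ, hball⟩ := Metric.eventually_nhds_iff.1 hev
    have hle : ENNReal.ofReal (t + δ / 2) ≤ tauM Ω Φ x := by
      apply le_sInf
      rintro s ⟨r, hr0, rfl, hout⟩
      apply ENNReal.ofReal_le_ofReal
      by_contra hlt
      push_neg at hlt
      rcases le_or_gt r t with hrt | hrt
      · exact hout (h r ⟨hr0.le, hrt⟩)
      · exact hout (hball (by rw [Real.dist_eq]; rw [abs_of_pos (by linarith)]; linarith))
    exact lt_of_lt_of_le (by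
      rw [ENNReal.ofReal_lt_ofReal_iff (by linarith)]; linarith) hle

theorem isOpen_G (hF : LipschitzWith κ F) (hΦ0 : ∀ x, Φ x 0 = x) (hΦ' : ∀ x s, HasDerivAt (Φ x) (F (Φ x s)) s)
    (hΩ : IsOpen Ω) (t : ℝ) :
    IsOpen {x : Fin N → ℝ | ∀ r ∈ Icc (0 : ℝ) t, Φ x (-r) ∈ Ω} := by
  rw [Metric.isOpen_iff]
  intro x hx
  have hK : IsCompact ((fun r => Φ x (-r)) '' Icc 0 t) :=
    (isCompact_Icc).image ((contPhi hΦ' x).comp continuous_neg)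
  obtain ⟨ε, hε, hsub⟩ := hK.exists_thickening_subset_open hΩ (by
    rintro _ ⟨r, hr, rfl⟩; exact hx r hr)
  refine ⟨ε / Real.exp (κ * |t|), by positivity, ?_⟩
  intro y hy
  intro r hr
  apply hsub
  rw [Metric.mem_thickening_iff]
  refine ⟨Φ x (-r), ⟨r, hr, rfl⟩, ?_⟩
  calc dist (Φ y (-r)) (Φ x (-r)) ≤ dist y x * Real.exp (κ * |(-r)|) :=
        dist_flow_le hF hΦ0 hΦ' y x (-r)
    _ ≤ dist y x * Real.exp (κ * |t|) := by
        apply mul_le_mul_of_nonneg_left _ dist_nonneg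
        apply Real.exp_le_exp.2
        apply mul_le_mul_of_nonneg_left _ κ.2
        rw [abs_neg, abs_of_nonneg hr.1]
        exact le_trans hr.2 (le_abs_self t)
    _ < (ε / Real.exp (κ * |t|)) * Real.exp (κ * |t|) := by
        apply mul_lt_mul_of_pos_right _ (Real.exp_pos _)
        exact lt_of_lt_of_le (Metric.mem_ball.1 hy) le_rfl
    _ = ε := div_mul_cancel₀ ε (Real.exp_pos _).ne'

theorem tauM_pos (hΦ0 : ∀ x, Φ x 0 = x) (hΦ' : ∀ x s, HasDerivAt (Φ x) (F (Φ x s)) s) (hΩ : IsOpen Ω)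
    {x : Fin N → ℝ} (hx : x ∈ Ω) : 0 < tauM Ω Φ x := by
  have := (memG_iff (Φ := Φ) (F := F) hΦ0 hΦ' hΩ le_rfl x).2
    (by intro r hr; have : r = 0 := le_antisymm hr.2 hr.1; simpa [this, hΦ0] using hx)
  simpa using this.2

theorem U0_ae_indicator (hΦ0 : ∀ x, Φ x 0 = x)
    (hΦ' : ∀ x s, HasDerivAt (Φ x) (F (Φ x s)) s) (hΩ : IsOpen Ω)
    (μ : Measure (Fin N → ℝ)) {t : ℝ} (ht : 0 ≤ t) (f : (Fin N → ℝ) → ℝ) :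
    ∀ᵐ x ∂(μ.restrict Ω), U0 Ω Φ t f x =
      ({x : Fin N → ℝ | ∀ r ∈ Icc (0 : ℝ) t, Φ x (-r) ∈ Ω}).indicator
        (fun x => f (Φ x (-t))) x := by
  filter_upwards [self_mem_ae_restrict hΩ.measurableSet] with x hx
  by_cases hc : ENNReal.ofReal t < tauM Ω Φ x
  · have hxG : x ∈ {x : Fin N → ℝ | ∀ r ∈ Icc (0 : ℝ) t, Φ x (-r) ∈ Ω} :=
      (memG_iff hΦ0 hΦ' hΩ ht x).1 ⟨hx, hc⟩
    rw [Set.indicator_of_mem hxG]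
    simp [U0, hc]
  · have hxG : x ∉ {x : Fin N → ℝ | ∀ r ∈ Icc (0 : ℝ) t, Φ x (-r) ∈ Ω} :=
      fun h => hc ((memG_iff hΦ0 hΦ' hΩ ht x).2 h).2
    rw [Set.indicator_of_notMem hxG]
    simp [U0, hc]

theorem part1 (hF : LipschitzWith κ F) (hΦ0 : ∀ x, Φ x 0 = x)
    (hΦ' : ∀ x s, HasDerivAt (Φ x) (F (Φ x s)) s) (hΩ : IsOpen Ω)
    (μ : Measure (Fin N → ℝ))
    (hinv : ∀ (A : Set (Fin N → ℝ)) (t : ℝ), MeasurableSet A →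
      μ ((fun x => Φ x t) '' A) = μ A)
    {f : (Fin N → ℝ) → ℝ} (hf : Integrable f (μ.restrict Ω)) {t : ℝ} (ht : 0 ≤ t) :
    Integrable (U0 Ω Φ t f) (μ.restrict Ω) ∧
      ∫ x in Ω, |U0 Ω Φ t f x| ∂μ ≤ ∫ x in Ω, |f x| ∂μ := by
  set G : Set (Fin N → ℝ) := {x : Fin N → ℝ | ∀ r ∈ Icc (0 : ℝ) t, Φ x (-r) ∈ Ω} with hG
  have hGopen : IsOpen G := isOpen_G hF hΦ0 hΦ' hΩ t
  have hGmeas : MeasurableSet G := hGopen.measurableSet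
  have hGsubΩ : G ⊆ Ω := fun x hx => by simpa [hΦ0] using hx 0 ⟨le_rfl, ht⟩
  set em := flowEquiv Φ hF hΦ0 hΦ' (-t) with hem
  have hemapp : ∀ x, em x = Φ x (-t) := fun _ => rfl
  set B : Set (Fin N → ℝ) := em '' G with hB
  have hBmeas : MeasurableSet B := em.measurableEmbedding.measurableSet_image.2 hGmeas
  have hBsub : B ⊆ Ω := by
    rintro _ ⟨x, hx, rfl⟩
    exact hx t ⟨ht, le_rfl⟩
  have hpre : em ⁻¹' B = G := Set.preimage_image_eq G em.injective
  have hmap : μ.restrict B = Measure.map em (μ.restrict G) := by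
    conv_lhs => rw [← map_flowEquiv hF hΦ0 hΦ' μ hinv (-t)]
    rw [Measure.restrict_map em.measurable hBmeas]
    rw [show ⇑(flowEquiv Φ hF hΦ0 hΦ' (-t)) ⁻¹' B = G from hpre]
  have hfo : IntegrableOn f Ω μ := hf
  have hintB : IntegrableOn f B μ := hfo.mono_set hBsub
  have hint_comp : IntegrableOn (fun x => f (Φ x (-t))) G μ := by
    rw [IntegrableOn, hmap] at hintB
    exact (integrable_map_equiv em f).1 hintB
  have hU0eq := U0_ae_indicator (Ω := Ω) hΦ0 hΦ' hΩ μ ht f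
  have hind_int : Integrable (G.indicator (fun x => f (Φ x (-t)))) (μ.restrict Ω) := by
    rw [integrable_indicator_iff hGmeas, IntegrableOn, Measure.restrict_restrict hGmeas,
      inter_eq_self_of_subset_left hGsubΩ]
    exact hint_comp
  have hint : Integrable (U0 Ω Φ t f) (μ.restrict Ω) :=
    hind_int.congr (by filter_upwards [hU0eq] with x hx using hx.symm)
  refine ⟨hint, ?_⟩
  have e1 : ∫ x in Ω, |U0 Ω Φ t f x| ∂μ
      = ∫ x in Ω, G.indicator (fun x => |f (Φ x (-t))|) x ∂μ := by
    apply integral_congr_ae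
    filter_upwards [hU0eq] with x hx
    rw [hx]
    by_cases hxG : x ∈ G
    · rw [Set.indicator_of_mem hxG, Set.indicator_of_mem hxG]
    · rw [Set.indicator_of_notMem hxG, Set.indicator_of_notMem hxG, abs_zero]
  have e2 : ∫ x in Ω, G.indicator (fun x => |f (Φ x (-t))|) x ∂μ
      = ∫ x in G, |f (Φ x (-t))| ∂μ := by
    rw [setIntegral_indicator hGmeas, inter_eq_self_of_subset_right hGsubΩ]
  have e3 : ∫ x in G, |f (Φ x (-t))| ∂μ = ∫ y in B, |f y| ∂μ := by
    rw [hmap, MeasureTheory.integral_map_equiv em (fun y => |f y|)]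
    rfl
  have e4 : ∫ y in B, |f y| ∂μ ≤ ∫ x in Ω, |f x| ∂μ := by
    apply setIntegral_mono_set hfo.abs
    · filter_upwards with x using abs_nonneg _
    · exact HasSubset.Subset.eventuallyLE hBsub
  rw [e1, e2, e3]
  exact e4

theorem U0_zero (hΦ0 : ∀ x, Φ x 0 = x)
    (hΦ' : ∀ x s, HasDerivAt (Φ x) (F (Φ x s)) s) (hΩ : IsOpen Ω)
    (f : (Fin N → ℝ) → ℝ) {x : Fin N → ℝ} (hx : x ∈ Ω) : U0 Ω Φ 0 f x = f x := by
  have hp := tauM_pos (Ω := Ω) hΦ0 hΦ' hΩ hx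
  simp [U0, ENNReal.ofReal_zero, hp, neg_zero, hΦ0]

theorem U0_comp (hF : LipschitzWith κ F) (hΦ0 : ∀ x, Φ x 0 = x)
    (hΦ' : ∀ x s, HasDerivAt (Φ x) (F (Φ x s)) s) (hΩ : IsOpen Ω)
    {t s : ℝ} (ht : 0 ≤ t) (hs : 0 ≤ s) (f : (Fin N → ℝ) → ℝ)
    {x : Fin N → ℝ} (hx : x ∈ Ω) :
    U0 Ω Φ t (U0 Ω Φ s f) x = U0 Ω Φ (t + s) f x := by
  have key : (ENNReal.ofReal t < tauM Ω Φ x ∧ ENNReal.ofReal s < tauM Ω Φ (Φ x (-t))) ↔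
      ENNReal.ofReal (t + s) < tauM Ω Φ x := by
    constructor
    · rintro ⟨h1, h2⟩
      have h1' := (memG_iff hΦ0 hΦ' hΩ ht x).1 ⟨hx, h1⟩
      have hΦt : Φ x (-t) ∈ Ω := h1' t ⟨ht, le_rfl⟩
      have h2' := (memG_iff hΦ0 hΦ' hΩ hs (Φ x (-t))).1 ⟨hΦt, h2⟩
      refine ((memG_iff hΦ0 hΦ' hΩ (by linarith) x).2 ?_).2
      intro r hr
      rcases le_or_gt r t with hrt | hrt
      · exact h1' r ⟨hr.1, hrt⟩
      · have h3 := h2' (r - t) ⟨by linarith, by linarith [hr.2]⟩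
        rwa [← flow_add hF hΦ0 hΦ', show -t + -(r - t) = -r by ring] at h3
    · intro h
      have h' := (memG_iff hΦ0 hΦ' hΩ (by linarith) x).1 ⟨hx, h⟩
      constructor
      · exact ((memG_iff hΦ0 hΦ' hΩ ht x).2
          (fun r hr => h' r ⟨hr.1, by linarith [hr.2]⟩)).2
      · refine ((memG_iff hΦ0 hΦ' hΩ hs (Φ x (-t))).2 ?_).2
        intro r hr
        have h3 := h' (t + r) ⟨by linarith [hr.1], by linarith [hr.2]⟩
        rwa [show -(t + r) = -t + -r by ring, flow_add hF hΦ0 hΦ'] at h3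
  by_cases H : ENNReal.ofReal (t + s) < tauM Ω Φ x
  · have h1 : ENNReal.ofReal t < tauM Ω Φ x :=
      lt_of_le_of_lt (ENNReal.ofReal_le_ofReal (by linarith)) H
    have h2 := (key.2 H).2
    simp only [U0, if_pos h1, if_pos h2, if_pos H]
    rw [← flow_add hF hΦ0 hΦ', show -t + -s = -(t + s) by ring]
  · simp only [U0, if_neg H]
    by_cases h1 : ENNReal.ofReal t < tauM Ω Φ x
    · have h2 : ¬ ENNReal.ofReal s < tauM Ω Φ (Φ x (-t)) := fun h2 => H (key.1 ⟨h1, h2⟩)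
      simp only [if_pos h1, if_neg h2]
    · simp only [if_neg h1]

theorem part4 (hF : LipschitzWith κ F) (hΦ0 : ∀ x, Φ x 0 = x)
    (hΦ' : ∀ x s, HasDerivAt (Φ x) (F (Φ x s)) s) (hΩ : IsOpen Ω)
    (μ : Measure (Fin N → ℝ))
    (hinv : ∀ (A : Set (Fin N → ℝ)) (t : ℝ), MeasurableSet A →
      μ ((fun x => Φ x t) '' A) = μ A)
    {f : (Fin N → ℝ) → ℝ} (hpos : ∀ᵐ x ∂μ.restrict Ω, 0 ≤ f x) {t : ℝ} (ht : 0 ≤ t) :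
    ∀ᵐ x ∂μ.restrict Ω, 0 ≤ U0 Ω Φ t f x := by
  set G : Set (Fin N → ℝ) := {x : Fin N → ℝ | ∀ r ∈ Icc (0 : ℝ) t, Φ x (-r) ∈ Ω} with hG
  have hGmeas : MeasurableSet G := (isOpen_G hF hΦ0 hΦ' hΩ t).measurableSet
  set em := flowEquiv Φ hF hΦ0 hΦ' (-t) with hem
  set B : Set (Fin N → ℝ) := em '' G with hB
  have hBmeas : MeasurableSet B := em.measurableEmbedding.measurableSet_image.2 hGmeas
  have hBsub : B ⊆ Ω := by
    rintro _ ⟨x, hxG, rfl⟩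
    exact hxG t ⟨ht, le_rfl⟩
  have hpre : em ⁻¹' B = G := Set.preimage_image_eq G em.injective
  have hmap : μ.restrict B = Measure.map em (μ.restrict G) := by
    conv_lhs => rw [← map_flowEquiv hF hΦ0 hΦ' μ hinv (-t)]
    rw [Measure.restrict_map em.measurable hBmeas]
    rw [show ⇑(flowEquiv Φ hF hΦ0 hΦ' (-t)) ⁻¹' B = G from hpre]
  have h1 : ∀ᵐ x ∂μ.restrict B, 0 ≤ f x := ae_restrict_of_ae_restrict_of_subset hBsub hpos
  have h2 : ∀ᵐ x ∂μ.restrict G, 0 ≤ f (em x) := by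
    rw [hmap, em.measurableEmbedding.ae_map_iff] at h1
    exact h1
  have h4 : ∀ᵐ x ∂μ.restrict Ω, x ∈ G → 0 ≤ f (em x) :=
    ae_restrict_of_ae ((ae_restrict_iff' hGmeas).1 h2)
  filter_upwards [h4, self_mem_ae_restrict hΩ.measurableSet] with x hx hxΩ
  by_cases hc : ENNReal.ofReal t < tauM Ω Φ x
  · have hxG : x ∈ G := (memG_iff hΦ0 hΦ' hΩ ht x).1 ⟨hxΩ, hc⟩
    have h5 : 0 ≤ f (Φ x (-t)) := hx hxG
    simp only [U0, if_pos hc]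
    exact h5
  · simp [U0, hc]

theorem dist_flow_self (hF : LipschitzWith κ F) (hκ : 0 < κ) (hΦ0 : ∀ x, Φ x 0 = x)
    (hΦ' : ∀ x s, HasDerivAt (Φ x) (F (Φ x s)) s)
    (y : Fin N → ℝ) {t : ℝ} (ht : 0 ≤ t) :
    dist (Φ y t) y ≤ ‖F y‖ / κ * (Real.exp (κ * t) - 1) := by
  have h := dist_le_of_approx_trajectories_ODE (v := fun _ z => F z) (K := κ)
    (f := Φ y) (g := fun _ => y) (f' := fun s => F (Φ y s)) (g' := fun _ => 0)
    (a := 0) (b := t) (εf := 0) (εg := ‖F y‖) (δ := 0)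
    (fun _ => hF) (contPhi hΦ' y).continuousOn
    (fun s _ => (hΦ' y s).hasDerivWithinAt)
    (fun s _ => by simp)
    continuousOn_const
    (fun s _ => (hasDerivAt_const s y).hasDerivWithinAt)
    (fun s _ => by simp [dist_eq_norm])
    (by simp [hΦ0]) t ⟨ht, le_rfl⟩
  rw [gronwallBound_of_K_ne_0 (by exact_mod_cast hκ.ne')] at h
  simpa using h

theorem part5_cont (hF : LipschitzWith κ F) (hκ : 0 < κ) (hΦ0 : ∀ x, Φ x 0 = x)
    (hΦ' : ∀ x s, HasDerivAt (Φ x) (F (Φ x s)) s) (hΩ : IsOpen Ω)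
    (μ : Measure (Fin N → ℝ)) [IsFiniteMeasureOnCompacts μ]
    {g : (Fin N → ℝ) → ℝ} (hgc : Continuous g) (hgs : HasCompactSupport g) :
    Tendsto (fun t => ∫ x in Ω, |U0 Ω Φ t g x - g x| ∂μ) (𝓝[>] (0 : ℝ)) (𝓝 0) := by
  classical
  set K : Set (Fin N → ℝ) := tsupport g with hK
  have hKc : IsCompact K := hgs
  obtain ⟨CF, hCF⟩ := hKc.exists_bound_of_continuousOn hF.continuous.continuousOn
  obtain ⟨Cg, hCg⟩ := hgs.exists_bound_of_continuous hgc
  have hCg0 : 0 ≤ Cg := le_trans (norm_nonneg _) (hCg 0)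
  set R : ℝ := max CF 0 / κ * (Real.exp κ - 1) with hR
  have hR0 : 0 ≤ R := by
    apply mul_nonneg (div_nonneg (le_max_right _ _) κ.2)
    have : (1 : ℝ) ≤ Real.exp κ := by
      rw [← Real.exp_zero]; exact Real.exp_le_exp.2 κ.2
    linarith
  set T : Set (Fin N → ℝ) := Metric.cthickening R K with hT
  have hTc : IsCompact T := hKc.cthickening
  set bound : (Fin N → ℝ) → ℝ := fun x => Cg * T.indicator (fun _ => (1:ℝ)) x + |g x|
    with hbound
  have hbound_int : Integrable bound (μ.restrict Ω) := by
    apply Integrable.add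
    · apply Integrable.const_mul
      apply Integrable.restrict
      rw [integrable_indicator_iff hTc.measurableSet]
      exact integrableOn_const hTc.measure_lt_top.ne (by simp)
    · exact (hgc.integrable_of_hasCompactSupport hgs).abs.restrict
  have main := tendsto_integral_filter_of_dominated_convergence
    (μ := μ.restrict Ω) (l := 𝓝[>] (0:ℝ))
    (F := fun t x => |U0 Ω Φ t g x - g x|) (f := fun _ => (0:ℝ)) bound ?_ ?_ hbound_int ?_
  · simpa using main
  · -- a.e. strong measurability
    filter_upwards [self_mem_nhdsWithin] with t (htpos : t ∈ Ioi (0:ℝ))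
    have ht : (0:ℝ) ≤ t := le_of_lt htpos
    have h1 : AEStronglyMeasurable (U0 Ω Φ t g) (μ.restrict Ω) := by
      apply AEStronglyMeasurable.congr _
        (by filter_upwards [U0_ae_indicator hΦ0 hΦ' hΩ μ ht g] with x hx using hx.symm)
      exact ((hgc.comp (cont_in_x hF hΦ0 hΦ' (-t))).aestronglyMeasurable).indicator
        (isOpen_G hF hΦ0 hΦ' hΩ t).measurableSet
    have h2 : AEStronglyMeasurable (fun x => U0 Ω Φ t g x - g x) (μ.restrict Ω) :=
      h1.sub hgc.aestronglyMeasurable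
    have := h2.norm
    simpa [Real.norm_eq_abs] using this
  · -- domination
    filter_upwards [Ioo_mem_nhdsGT_of_mem (show (0:ℝ) ∈ Ico (0:ℝ) 1 by norm_num)]
      with t (htm : t ∈ Ioo (0:ℝ) 1)
    filter_upwards with x
    have hind : 0 ≤ T.indicator (fun _ => (1:ℝ)) x := by
      by_cases hxT : x ∈ T <;> simp [hxT]
    have hU0le : |U0 Ω Φ t g x| ≤ Cg * T.indicator (fun _ => (1:ℝ)) x := by
      by_cases hc : ENNReal.ofReal t < tauM Ω Φ x
      · simp only [U0, if_pos hc]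
        by_cases hz : g (Φ x (-t)) = 0
        · rw [hz, abs_zero]; positivity
        · have hyK : Φ x (-t) ∈ K := subset_tsupport g hz
          have hxT : x ∈ T := by
            apply Metric.mem_cthickening_of_dist_le x (Φ x (-t)) R K hyK
            have hxeq : Φ (Φ x (-t)) t = x := by
              have := flow_inv hF hΦ0 hΦ' x (-t); rwa [neg_neg] at this
            calc dist x (Φ x (-t)) = dist (Φ (Φ x (-t)) t) (Φ x (-t)) := by rw [hxeq]
              _ ≤ ‖F (Φ x (-t))‖ / κ * (Real.exp (κ * t) - 1) :=
                  dist_flow_self hF hκ hΦ0 hΦ' _ htm.1.le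
              _ ≤ max CF 0 / κ * (Real.exp κ - 1) := by
                  have hκR : (0:ℝ) < (κ:ℝ) := NNReal.coe_pos.2 hκ
                  have e1 : (1:ℝ) ≤ Real.exp (κ * t) := by
                    rw [← Real.exp_zero]
                    exact Real.exp_le_exp.2 (mul_nonneg κ.2 htm.1.le)
                  have eT : Real.exp ((κ:ℝ) * t) ≤ Real.exp κ := by
                    apply Real.exp_le_exp.2
                    nlinarith [htm.2.le, κ.2]
                  apply mul_le_mul _ (by linarith) (by linarith)
                    (div_nonneg (le_max_right _ _) κ.2)
                  exact (div_le_div_iff_of_pos_right hκR).2 (le_max_of_le_left (hCF _ hyK))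
              _ = R := hR.symm
          rw [Set.indicator_of_mem hxT]
          simpa using hCg (Φ x (-t))
      · simp only [U0, if_neg hc, abs_zero]
        positivity
    calc ‖|U0 Ω Φ t g x - g x|‖ = |U0 Ω Φ t g x - g x| := by
          rw [Real.norm_eq_abs, abs_abs]
      _ ≤ |U0 Ω Φ t g x| + |g x| := abs_sub _ _
      _ ≤ Cg * T.indicator (fun _ => (1:ℝ)) x + |g x| := by linarith
  · -- pointwise limit
    filter_upwards [self_mem_ae_restrict hΩ.measurableSet] with x hx
    have h0 : 0 < tauM Ω Φ x := tauM_pos hΦ0 hΦ' hΩ hx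
    obtain ⟨c, hc1, hc2⟩ := exists_between h0
    have hcT : c < ⊤ := lt_of_lt_of_le hc2 le_top
    set δ : ℝ := c.toReal with hδ
    have hδpos : 0 < δ := ENNReal.toReal_pos hc1.ne' hcT.ne
    have hoc : ENNReal.ofReal δ = c := ENNReal.ofReal_toReal hcT.ne
    have hev : ∀ᶠ t in 𝓝[>] (0:ℝ),
        |g (Φ x (-t)) - g x| = |U0 Ω Φ t g x - g x| := by
      filter_upwards [Ioo_mem_nhdsGT_of_mem (show (0:ℝ) ∈ Ico (0:ℝ) δ from ⟨le_rfl, hδpos⟩)]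
        with t (htm : t ∈ Ioo (0:ℝ) δ)
      have hcond : ENNReal.ofReal t < tauM Ω Φ x := by
        apply lt_of_lt_of_le _ hc2.le
        rw [← hoc]
        exact (ENNReal.ofReal_lt_ofReal_iff hδpos).2 htm.2
      simp [U0, hcond]
    have hcont : Tendsto (fun t : ℝ => |g (Φ x (-t)) - g x|) (𝓝 0) (𝓝 0) := by
      have hc : Continuous (fun t : ℝ => |g (Φ x (-t)) - g x|) :=
        ((hgc.comp ((contPhi hΦ' x).comp continuous_neg)).sub continuous_const).abs
      have := hc.tendsto 0
      simpa [hΦ0] using this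
    exact (hcont.mono_left nhdsWithin_le_nhds).congr' hev

theorem part5 (hF : LipschitzWith κ F) (hκ : 0 < κ) (hΦ0 : ∀ x, Φ x 0 = x)
    (hΦ' : ∀ x s, HasDerivAt (Φ x) (F (Φ x s)) s) (hΩ : IsOpen Ω)
    (μ : Measure (Fin N → ℝ)) [IsFiniteMeasureOnCompacts μ]
    (hinv : ∀ (A : Set (Fin N → ℝ)) (t : ℝ), MeasurableSet A →
      μ ((fun x => Φ x t) '' A) = μ A)
    {f : (Fin N → ℝ) → ℝ} (hf : Integrable f (μ.restrict Ω)) :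
    Tendsto (fun t => ∫ x in Ω, |U0 Ω Φ t f x - f x| ∂μ) (𝓝[>] (0 : ℝ)) (𝓝 0) := by
  rw [Metric.tendsto_nhds]
  intro ε hε
  have hf0 : Integrable (Ω.indicator f) μ := (integrable_indicator_iff hΩ.measurableSet).2 hf
  obtain ⟨g, hgs, hgL1, hgc, hgint⟩ := hf0.exists_hasCompactSupport_integral_sub_le
    (show (0:ℝ) < ε/4 by linarith)
  have hgΩ : Integrable g (μ.restrict Ω) := hgint.restrict
  have hfg_int : Integrable (fun x => f x - g x) (μ.restrict Ω) := hf.sub hgΩ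
  have hfgle : ∫ x in Ω, |f x - g x| ∂μ ≤ ε / 4 := by
    have h1 : ∫ x in Ω, |f x - g x| ∂μ = ∫ x in Ω, ‖Ω.indicator f x - g x‖ ∂μ := by
      apply setIntegral_congr_fun hΩ.measurableSet
      intro x hx
      simp [Set.indicator_of_mem hx, Real.norm_eq_abs]
    have h2 : ∫ x in Ω, ‖Ω.indicator f x - g x‖ ∂μ ≤ ∫ x, ‖Ω.indicator f x - g x‖ ∂μ :=
      setIntegral_le_integral (hf0.sub hgint).norm
        (by filter_upwards with x using norm_nonneg _)
    linarith [hgL1]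
  have hmid := part5_cont hF hκ hΦ0 hΦ' hΩ μ hgc hgs
  have hmid' : ∀ᶠ t in 𝓝[>] (0:ℝ), ∫ x in Ω, |U0 Ω Φ t g x - g x| ∂μ < ε / 4 :=
    (tendsto_order.1 hmid).2 (ε / 4) (by linarith)
  filter_upwards [hmid', self_mem_nhdsWithin] with t hmidt (htpos : t ∈ Ioi (0:ℝ))
  have ht : (0:ℝ) ≤ t := le_of_lt htpos
  have hU0f := part1 hF hΦ0 hΦ' hΩ μ hinv hf ht
  have hU0g := part1 hF hΦ0 hΦ' hΩ μ hinv hgΩ ht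
  have hU0fg := part1 hF hΦ0 hΦ' hΩ μ hinv hfg_int ht
  have hpt : ∀ x, U0 Ω Φ t f x - f x =
      U0 Ω Φ t (fun x => f x - g x) x + (U0 Ω Φ t g x - g x) + (g x - f x) := by
    intro x
    by_cases hc : ENNReal.ofReal t < tauM Ω Φ x <;> simp [U0, hc] <;> ring
  have hi1 : Integrable (fun x => |U0 Ω Φ t (fun x => f x - g x) x|) (μ.restrict Ω) :=
    hU0fg.1.abs
  have hi2 : Integrable (fun x => |U0 Ω Φ t g x - g x|) (μ.restrict Ω) := (hU0g.1.sub hgΩ).abs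
  have hi3 : Integrable (fun x => |g x - f x|) (μ.restrict Ω) := (hgΩ.sub hf).abs
  have key : ∫ x in Ω, |U0 Ω Φ t f x - f x| ∂μ ≤
      (∫ x in Ω, |U0 Ω Φ t (fun x => f x - g x) x| ∂μ)
        + (∫ x in Ω, |U0 Ω Φ t g x - g x| ∂μ) + ∫ x in Ω, |g x - f x| ∂μ := by
    have hle : ∀ x, |U0 Ω Φ t f x - f x| ≤
        |U0 Ω Φ t (fun x => f x - g x) x| + |U0 Ω Φ t g x - g x| + |g x - f x| := by
      intro x
      rw [hpt x]
      exact abs_add_three _ _ _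
    calc ∫ x in Ω, |U0 Ω Φ t f x - f x| ∂μ
        ≤ ∫ x in Ω, (|U0 Ω Φ t (fun x => f x - g x) x| + |U0 Ω Φ t g x - g x|
            + |g x - f x|) ∂μ :=
          integral_mono (hU0f.1.sub hf).abs ((hi1.add hi2).add hi3) hle
      _ = _ := by
          have ha := integral_add (μ := μ.restrict Ω) hi1 hi2
          have hb := integral_add (μ := μ.restrict Ω) (hi1.add hi2) hi3
          simp only [Pi.add_apply] at ha hb
          rw [hb, ha]
  have hgf : ∫ x in Ω, |g x - f x| ∂μ = ∫ x in Ω, |f x - g x| ∂μ := by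
    apply integral_congr_ae
    filter_upwards with x using abs_sub_comm _ _
  have hbfg : ∫ x in Ω, |U0 Ω Φ t (fun x => f x - g x) x| ∂μ
      ≤ ∫ x in Ω, |f x - g x| ∂μ := hU0fg.2
  rw [Real.dist_eq, sub_zero, abs_of_nonneg (integral_nonneg (fun x => abs_nonneg _))]
  rw [hgf] at key
  calc ∫ x in Ω, |U0 Ω Φ t f x - f x| ∂μ
      ≤ (∫ x in Ω, |f x - g x| ∂μ) + (∫ x in Ω, |U0 Ω Φ t g x - g x| ∂μ)
        + ∫ x in Ω, |f x - g x| ∂μ := by linarith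
    _ < ε := by linarith

end Stmt17Aux

theorem stmt_17
    {N : ℕ} (hN : 1 ≤ N) (κ : ℝ≥0) (hκ : 0 < κ)
    (F : (Fin N → ℝ) → (Fin N → ℝ)) (hF : LipschitzWith κ F)
    (Φ : (Fin N → ℝ) → ℝ → (Fin N → ℝ))
    (hΦ0 : ∀ x, Φ x 0 = x)
    (hΦ' : ∀ x s, HasDerivAt (Φ x) (F (Φ x s)) s)
    (Ω : Set (Fin N → ℝ)) (hΩ : IsOpen Ω)
    (μ : Measure (Fin N → ℝ)) [IsFiniteMeasureOnCompacts μ]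
    (hinv : ∀ (A : Set (Fin N → ℝ)) (t : ℝ), MeasurableSet A →
      μ ((fun x => Φ x t) '' A) = μ A)
    (f : (Fin N → ℝ) → ℝ) (hf : Integrable f (μ.restrict Ω)) :
    (∀ t : ℝ, 0 ≤ t → Integrable (U0 Ω Φ t f) (μ.restrict Ω) ∧
      ∫ x in Ω, |U0 Ω Φ t f x| ∂μ ≤ ∫ x in Ω, |f x| ∂μ) ∧
    (U0 Ω Φ 0 f =ᵐ[μ.restrict Ω] f) ∧
    (∀ t s : ℝ, 0 ≤ t → 0 ≤ s →
      U0 Ω Φ t (U0 Ω Φ s f) =ᵐ[μ.restrict Ω] U0 Ω Φ (t + s) f) ∧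
    ((∀ᵐ x ∂μ.restrict Ω, 0 ≤ f x) →
      ∀ t : ℝ, 0 ≤ t → ∀ᵐ x ∂μ.restrict Ω, 0 ≤ U0 Ω Φ t f x) ∧
    Tendsto (fun t => ∫ x in Ω, |U0 Ω Φ t f x - f x| ∂μ) (𝓝[>] (0 : ℝ)) (𝓝 0) := by
  classical
  have hΩm := hΩ.measurableSet
  refine ⟨fun t ht => Stmt17Aux.part1 hF hΦ0 hΦ' hΩ μ hinv hf ht, ?_, ?_, ?_, ?_⟩
  · filter_upwards [self_mem_ae_restrict hΩm] with x hx using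
      Stmt17Aux.U0_zero hΦ0 hΦ' hΩ f hx
  · intro t s ht hs
    filter_upwards [self_mem_ae_restrict hΩm] with x hx using
      Stmt17Aux.U0_comp hF hΦ0 hΦ' hΩ ht hs f hx
  · intro hpos t ht
    exact Stmt17Aux.part4 hF hΦ0 hΦ' hΩ μ hinv hpos ht
  · exact Stmt17Aux.part5 hF hκ hΦ0 hΦ' hΩ μ hinv hf

end
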